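/- Define H_α(x) = 1 + (1−x)^α − (1−x)^{(1+α)/2} − (1+x)^{(1−α)/2} for x ∈ [0,1). For every α < 0 and every x ∈ [0,1), the third derivative satisfies H_α'''(x) > 0; consequently H_α(x) > ((1−α)²/4) x² for all x ∈ (0,1). -/

import Mathlib

/-!
Writing `u = (1-x)^(α-3)`, `v = (1-x)^((1+α)/2-3)`, `w = (1+x)^((1-α)/2-3)`, one has
`8 H_α''' / (1-α) = 8(-α)(2-α) u + (1+α)(3-α) v - (1+α)(3+α) w`. Since `(1-x)(1+x) ≤ 1`, the power
`u` dominates `v` and `w`, and in each of the ranges `α ≥ -1`, `-3 ≤ α < -1`, `α < -3` this bounds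
the right-hand side below by a positive multiple of `u`.

For the lower bound, `G = H_α - (1-α)² x² / 4` satisfies `G(0) = G'(0) = G''(0) = 0` and
`G''' = H_α''' > 0`, so `G''`, `G'` and `G` are successively positive on `(0, 1)`.
-/

open Real Set Filter Topology Polynomial

lemma pos_of_hasDerivAt_pos {g g' : ℝ → ℝ} {a b : ℝ}
    (hg : ∀ y ∈ Ico a b, HasDerivAt g (g' y) y) (ha : g a = 0)
    (hg' : ∀ y ∈ Ioo a b, 0 < g' y) : ∀ x ∈ Ioo a b, 0 < g x := by
  intro x hx
  have hmono : StrictMonoOn g (Ico a b) := by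
    refine strictMonoOn_of_deriv_pos (convex_Ico a b)
      (fun y hy => (hg y hy).continuousAt.continuousWithinAt) fun y hy => ?_
    rw [interior_Ico] at hy
    rw [(hg y (Ioo_subset_Ico_self hy)).deriv]
    exact hg' y hy
  simpa [ha] using hmono ⟨le_rfl, hx.1.trans hx.2⟩ (Ioo_subset_Ico_self hx) hx.1

lemma pos_of_third_hasDerivAt_pos {g₀ g₁ g₂ g₃ : ℝ → ℝ} {a b : ℝ}
    (h₀ : ∀ y ∈ Ico a b, HasDerivAt g₀ (g₁ y) y) (h₁ : ∀ y ∈ Ico a b, HasDerivAt g₁ (g₂ y) y)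
    (h₂ : ∀ y ∈ Ico a b, HasDerivAt g₂ (g₃ y) y) (hg₀ : g₀ a = 0) (hg₁ : g₁ a = 0)
    (hg₂ : g₂ a = 0) (hg₃ : ∀ y ∈ Ioo a b, 0 < g₃ y) : ∀ x ∈ Ioo a b, 0 < g₀ x :=
  pos_of_hasDerivAt_pos h₀ hg₀ <| pos_of_hasDerivAt_pos h₁ hg₁ <| pos_of_hasDerivAt_pos h₂ hg₂ hg₃

lemma one_add_rpow_le_one_sub_rpow {x p q : ℝ} (hx : x ∈ Ico (0 : ℝ) 1) (hq : q ≤ 0)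
    (hpq : q ≤ -p) : (1 + x) ^ p ≤ (1 - x) ^ q := by
  obtain ⟨hx₀, hx₁⟩ := hx
  have hpos : 0 < 1 - x := by linarith
  rcases le_or_gt p 0 with hp | hp
  · calc (1 + x) ^ p ≤ 1 := rpow_le_one_of_one_le_of_nonpos (by linarith) hp
      _ ≤ (1 - x) ^ q := one_le_rpow_of_pos_of_le_one_of_nonpos hpos (by linarith) hq
  · have hle : 1 + x ≤ (1 - x)⁻¹ := by
      rw [← one_div, le_div_iff₀ hpos]
      nlinarith
    calc (1 + x) ^ p ≤ (1 - x)⁻¹ ^ p := rpow_le_rpow (by linarith) hle hp.le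
      _ = (1 - x) ^ (-p) := by rw [inv_rpow hpos.le, rpow_neg hpos.le]
      _ ≤ (1 - x) ^ q := rpow_le_rpow_of_exponent_ge hpos (by linarith) hpq

lemma hasDerivAt_descPochhammer_mul_one_sub_rpow (p : ℝ) (k : ℕ) {x : ℝ} (hx : x < 1) :
    HasDerivAt (fun y => (-1) ^ k * (descPochhammer ℝ k).eval p * (1 - y) ^ (p - k))
      ((-1) ^ (k + 1) * (descPochhammer ℝ (k + 1)).eval p * (1 - x) ^ (p - (k + 1 : ℕ))) x := by
  have h := ((hasDerivAt_rpow_const (p := p - k) (Or.inl (sub_pos.2 hx).ne')).comp x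
    ((hasDerivAt_id x).const_sub 1)).const_mul ((-1) ^ k * (descPochhammer ℝ k).eval p)
  refine h.congr_deriv ?_
  rw [descPochhammer_succ_eval, Nat.cast_succ, ← sub_sub, pow_succ]
  ring

lemma hasDerivAt_descPochhammer_mul_one_add_rpow (p : ℝ) (k : ℕ) {x : ℝ} (hx : -1 < x) :
    HasDerivAt (fun y => (descPochhammer ℝ k).eval p * (1 + y) ^ (p - k))
      ((descPochhammer ℝ (k + 1)).eval p * (1 + x) ^ (p - (k + 1 : ℕ))) x := by
  have h := ((hasDerivAt_rpow_const (p := p - k) (Or.inl (by linarith : 1 + x ≠ 0))).comp x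
    ((hasDerivAt_id x).const_add 1)).const_mul ((descPochhammer ℝ k).eval p)
  refine h.congr_deriv ?_
  rw [descPochhammer_succ_eval, Nat.cast_succ, ← sub_sub]
  ring

noncomputable def Halpha (α x : ℝ) : ℝ :=
  1 + (1 - x) ^ α - (1 - x) ^ ((1 + α) / 2) - (1 + x) ^ ((1 - α) / 2)

/-- From `dᵏ/dxᵏ (1 ± x)^p = (±1)^k p(p-1)⋯(p-k+1) (1 ± x)^(p-k)`; the `if` accounts for the
constant `1`. -/
noncomputable def HalphaDeriv (α : ℝ) (k : ℕ) (x : ℝ) : ℝ :=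
  (if k = 0 then 1 else 0)
    + (-1) ^ k * (descPochhammer ℝ k).eval α * (1 - x) ^ (α - k)
    - (-1) ^ k * (descPochhammer ℝ k).eval ((1 + α) / 2) * (1 - x) ^ ((1 + α) / 2 - k)
    - (descPochhammer ℝ k).eval ((1 - α) / 2) * (1 + x) ^ ((1 - α) / 2 - k)

namespace HalphaDeriv

variable (α : ℝ)

theorem zero_eq : HalphaDeriv α 0 = Halpha α := by
  ext x
  simp [HalphaDeriv, Halpha]

theorem hasDerivAt (k : ℕ) {x : ℝ} (hx : x ∈ Ioo (-1 : ℝ) 1) :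
    HasDerivAt (HalphaDeriv α k) (HalphaDeriv α (k + 1) x) x := by
  have h := (((hasDerivAt_const x (if k = 0 then (1 : ℝ) else 0)).add
    (hasDerivAt_descPochhammer_mul_one_sub_rpow α k hx.2)).sub
    (hasDerivAt_descPochhammer_mul_one_sub_rpow ((1 + α) / 2) k hx.2)).sub
    (hasDerivAt_descPochhammer_mul_one_add_rpow ((1 - α) / 2) k hx.1)
  refine h.congr_deriv ?_
  simp [HalphaDeriv]

theorem apply_zero_zero : HalphaDeriv α 0 0 = 0 := by
  simp [HalphaDeriv]

theorem apply_one_zero : HalphaDeriv α 1 0 = 0 := by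
  simp only [HalphaDeriv, one_ne_zero, ↓reduceIte, pow_one, descPochhammer_one, eval_X, Nat.cast_one,
    sub_zero, add_zero, one_rpow]
  ring

theorem apply_two_zero : HalphaDeriv α 2 0 = (1 - α) ^ 2 / 2 := by
  simp only [HalphaDeriv, OfNat.ofNat_ne_zero, ↓reduceIte, descPochhammer_succ_eval,
    descPochhammer_one, eval_X, Nat.cast_one, Nat.cast_ofNat, sub_zero, one_rpow, add_zero]
  ring

theorem three_eq (x : ℝ) :
    HalphaDeriv α 3 x = (1 - α) / 8 * (8 * -α * (2 - α) * (1 - x) ^ (α - 3)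
      + (1 + α) * (3 - α) * (1 - x) ^ ((1 + α) / 2 - 3)
      - (1 + α) * (3 + α) * (1 + x) ^ ((1 - α) / 2 - 3)) := by
  simp only [HalphaDeriv, OfNat.ofNat_ne_zero, ↓reduceIte, descPochhammer_succ_eval,
    descPochhammer_one, eval_X, Nat.cast_one, Nat.cast_ofNat]
  ring

end HalphaDeriv

theorem iteratedDeriv_Halpha (α : ℝ) (k : ℕ) {x : ℝ} (hx : x ∈ Ioo (-1 : ℝ) 1) :
    iteratedDeriv k (Halpha α) x = HalphaDeriv α k x := by
  induction k generalizing x with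
  | zero => rw [iteratedDeriv_zero, HalphaDeriv.zero_eq]
  | succ k ih =>
    have h : iteratedDeriv k (Halpha α) =ᶠ[𝓝 x] HalphaDeriv α k :=
      eventually_of_mem (Ioo_mem_nhds hx.1 hx.2) fun y hy => ih hy
    rw [iteratedDeriv_succ, h.deriv_eq, (HalphaDeriv.hasDerivAt α k hx).deriv]

theorem HalphaDeriv.three_pos {α x : ℝ} (hα : α < 0) (hx : x ∈ Ico (0 : ℝ) 1) :
    0 < HalphaDeriv α 3 x := by
  have ht : 0 < 1 - x := by linarith [hx.2]
  have ht₁ : 1 - x ≤ 1 := by linarith [hx.1]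
  rw [HalphaDeriv.three_eq]
  set u := (1 - x) ^ (α - 3)
  set v := (1 - x) ^ ((1 + α) / 2 - 3)
  set w := (1 + x) ^ ((1 - α) / 2 - 3)
  have hu : 0 < u := rpow_pos_of_pos ht _
  have hv : 1 ≤ v := one_le_rpow_of_pos_of_le_one_of_nonpos ht ht₁ (by linarith)
  have hvu : v ≤ u := rpow_le_rpow_of_exponent_ge ht ht₁ (by linarith)
  have hwu : w ≤ u := one_add_rpow_le_one_sub_rpow hx (by linarith) (by linarith)
  refine mul_pos (by linarith) ?_
  have hw : 0 ≤ w := rpow_nonneg (by linarith [hx.1]) _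
  rcases le_or_gt (-1) α with hα₁ | hα₁
  · have hw₁ : w ≤ 1 := rpow_le_one_of_one_le_of_nonpos (by linarith [hx.1]) (by linarith)
    have h₁ : 0 ≤ (1 + α) * (3 + α) * (v - w) :=
      mul_nonneg (mul_nonneg (by linarith) (by linarith)) (by linarith)
    have h₂ : 0 ≤ (1 + α) * -α * v :=
      mul_nonneg (mul_nonneg (by linarith) (by linarith)) (by linarith)
    have h₃ : 0 < -α * (2 - α) * u := mul_pos (mul_pos (by linarith) (by linarith)) hu
    linarith
  have h₁ : 0 ≤ -(1 + α) * (3 - α) * (u - v) :=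
    mul_nonneg (mul_nonneg (by linarith) (by linarith)) (by linarith)
  -- `8(-α)(2-α) + (1+α)(3-α) = 7α² - 14α + 3`, and adding `-(1+α)(3+α)` gives `6α(α-3)`.
  rcases le_or_gt (-3) α with hα₃ | hα₃
  · have h₂ : 0 ≤ -(1 + α) * (3 + α) * w := mul_nonneg (mul_nonneg (by linarith) (by linarith)) hw
    have h₃ : 0 < (7 * α ^ 2 - 14 * α + 3) * u := mul_pos (by nlinarith) hu
    linarith
  · have h₂ : 0 ≤ -(1 + α) * -(3 + α) * (u - w) :=
      mul_nonneg (mul_nonneg (by linarith) (by linarith)) (by linarith)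
    have h₃ : 0 < α * (α - 3) * u := mul_pos (mul_pos_of_neg_of_neg hα (by linarith)) hu
    linarith

theorem mul_sq_lt_Halpha (α : ℝ) (hα : α < 0) :
    ∀ x ∈ Ioo (0 : ℝ) 1, (1 - α) ^ 2 / 4 * x ^ 2 < Halpha α x := by
  have hd : ∀ k, ∀ y ∈ Ico (0 : ℝ) 1, HasDerivAt (HalphaDeriv α k) (HalphaDeriv α (k + 1) y) y :=
    fun k y hy => HalphaDeriv.hasDerivAt α k ⟨by linarith [hy.1], hy.2⟩
  have hgap := pos_of_third_hasDerivAt_pos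
    (g₀ := fun y => HalphaDeriv α 0 y - (1 - α) ^ 2 / 4 * y ^ 2)
    (g₁ := fun y => HalphaDeriv α 1 y - (1 - α) ^ 2 / 2 * y)
    (g₂ := fun y => HalphaDeriv α 2 y - (1 - α) ^ 2 / 2)
    (fun y hy => ((hd 0 y hy).sub ((hasDerivAt_pow 2 y).const_mul _)).congr_deriv (by ring))
    (fun y hy => ((hd 1 y hy).sub ((hasDerivAt_id y).const_mul _)).congr_deriv (by ring))
    (fun y hy => ((hd 2 y hy).sub_const _))
    (by simp [HalphaDeriv.apply_zero_zero]) (by simp [HalphaDeriv.apply_one_zero])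
    (by simp [HalphaDeriv.apply_two_zero])
    (fun y hy => HalphaDeriv.three_pos hα (Ioo_subset_Ico_self hy))
  intro x hx
  have := hgap x hx
  rw [HalphaDeriv.zero_eq] at this
  linarith

theorem Halpha_third_deriv_pos (α : ℝ) (hα : α < 0) :
    (∀ x ∈ Set.Ico (0 : ℝ) 1,
      0 < iteratedDeriv 3
        (fun x : ℝ => 1 + (1 - x) ^ α - (1 - x) ^ ((1 + α) / 2) - (1 + x) ^ ((1 - α) / 2)) x) ∧
    (∀ x ∈ Set.Ioo (0 : ℝ) 1,
      ((1 - α) ^ 2 / 4) * x ^ 2 <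
        1 + (1 - x) ^ α - (1 - x) ^ ((1 + α) / 2) - (1 + x) ^ ((1 - α) / 2)) := by
  refine ⟨fun x hx => ?_, mul_sq_lt_Halpha α hα⟩
  change 0 < iteratedDeriv 3 (Halpha α) x
  rw [iteratedDeriv_Halpha α 3 ⟨by linarith [hx.1], hx.2⟩]
  exact HalphaDeriv.three_pos hα hx
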